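/- arXiv:2010.14706 — 4 statements merged into one kernel-verified Lean document; each statement's English description precedes it below -/
import Mathlib

section
/- Assume α > 0 and λ ∈ [0,1). If φ* ∈ 𝒞 satisfies J(φ*) ≤ J(φ) for every φ ∈ 𝒞, then the dissimilarity constraint is active at φ*: Σ_{k=1}^N d_k φ*_k = 1. -/
/-- Theorem 1, item 2 (SPML): any minimizer of the objective
`J(φ) = Σ s_k φ_k + α (λ Σ |φ_k| + (1-λ) (Σ φ_k²)^{1/2})` over the feasible set
`𝒞 = {φ : Σ d_k φ_k ≥ 1, φ > 0}` satisfies the active constraint `Σ d_k φ_k = 1`. -/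
theorem spml_minimizer_active_constraint (N : ℕ) (hN : 1 ≤ N) (s d : Fin N → ℝ)
    (hs : ∀ k, 0 ≤ s k) (hd : ∀ k, 0 ≤ d k)
    (α lam : ℝ) (hα : 0 < α) (hlam0 : 0 ≤ lam) (hlam1 : lam < 1)
    (J : (Fin N → ℝ) → ℝ)
    (hJ : ∀ φ : Fin N → ℝ, J φ =
      (∑ k, s k * φ k) +
        α * (lam * ∑ k, |φ k| + (1 - lam) * Real.sqrt (∑ k, (φ k) ^ 2)))
    (φs : Fin N → ℝ)
    (hfeas : 1 ≤ ∑ k, d k * φs k ∧ ∀ k, 0 < φs k)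
    (hmin : ∀ φ : Fin N → ℝ,
      (1 ≤ ∑ k, d k * φ k ∧ ∀ k, 0 < φ k) → J φs ≤ J φ) :
    ∑ k, d k * φs k = 1 := by
  obtain ⟨hD, hpos⟩ := hfeas
  by_contra hne
  have hDgt : 1 < ∑ k, d k * φs k := lt_of_le_of_ne hD (Ne.symm hne)
  set D := ∑ k, d k * φs k with hDdef
  have hDpos : (0:ℝ) < D := lt_trans one_pos hDgt
  set t : ℝ := D⁻¹ with ht
  have htpos : 0 < t := inv_pos.mpr hDpos
  have htlt : t < 1 := by
    rw [ht]
    exact inv_lt_one_of_one_lt₀ hDgt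
  -- the scaled point is feasible
  have hfeas' : 1 ≤ ∑ k, d k * (t * φs k) ∧ ∀ k, 0 < t * φs k := by
    constructor
    · have : ∑ k, d k * (t * φs k) = t * D := by
        rw [hDdef, Finset.mul_sum]
        congr 1; ext k; ring
      rw [this, ht, inv_mul_cancel₀ (ne_of_gt hDpos)]
    · exact fun k => mul_pos htpos (hpos k)
  -- J is positively homogeneous
  have hsum_pos : 0 < ∑ k, (φs k) ^ 2 := by
    have h0 : (⟨0, hN⟩ : Fin N) ∈ Finset.univ := Finset.mem_univ _
    refine Finset.sum_pos' (fun k _ => sq_nonneg _) ⟨⟨0, hN⟩, h0, ?_⟩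
    exact pow_pos (hpos _) 2
  have hJpos : 0 < J φs := by
    rw [hJ]
    have h1 : 0 ≤ ∑ k, s k * φs k :=
      Finset.sum_nonneg fun k _ => mul_nonneg (hs k) (le_of_lt (hpos k))
    have h2 : 0 ≤ lam * ∑ k, |φs k| :=
      mul_nonneg hlam0 (Finset.sum_nonneg fun k _ => abs_nonneg _)
    have h3 : 0 < (1 - lam) * Real.sqrt (∑ k, (φs k) ^ 2) :=
      mul_pos (by linarith) (Real.sqrt_pos.mpr hsum_pos)
    have := mul_pos hα (by linarith : 0 < lam * ∑ k, |φs k| + (1 - lam) * Real.sqrt (∑ k, (φs k) ^ 2))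
    linarith
  have hhom : J (fun k => t * φs k) = t * J φs := by
    rw [hJ, hJ]
    have e1 : ∑ k, s k * (t * φs k) = t * ∑ k, s k * φs k := by
      rw [Finset.mul_sum]; congr 1; ext k; ring
    have e2 : ∑ k, |t * φs k| = t * ∑ k, |φs k| := by
      rw [Finset.mul_sum]; congr 1; ext k
      rw [abs_mul, abs_of_pos htpos]
    have e3 : Real.sqrt (∑ k, (t * φs k) ^ 2) = t * Real.sqrt (∑ k, (φs k) ^ 2) := by
      have : ∑ k, (t * φs k) ^ 2 = t ^ 2 * ∑ k, (φs k) ^ 2 := by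
        rw [Finset.mul_sum]; congr 1; ext k; ring
      rw [this, Real.sqrt_mul (sq_nonneg t), Real.sqrt_sq (le_of_lt htpos)]
    rw [e1, e2, e3]; ring
  have := hmin (fun k => t * φs k) hfeas'
  rw [hhom] at this
  nlinarith
end

section
/- Let s, d, φ, η ∈ ℝ^N and μ ∈ ℝ satisfy the first-order stationarity conditions of the unregularized discretized SPML problem: s_ℓ + η_ℓ + μ d_ℓ = 0 for every ℓ ∈ {1,…,N}, and η_ℓ = 0 whenever φ_ℓ ≠ 0. If there exist two distinct indices ℓ₁ ≠ ℓ₂ with φ_{ℓ₁} ≠ 0 and φ_{ℓ₂} ≠ 0, then s_{ℓ₁} d_{ℓ₂} = s_{ℓ₂} d_{ℓ₁}. Consequently, for generic data (i.e., whenever s_{ℓ₁} d_{ℓ₂} ≠ s_{ℓ₂} d_{ℓ₁} for all pairs of distinct indices), any stationary point φ has at most one nonzero component. -/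
/-- Theorem 1, item 4 (SPML, no regularization): if the KKT stationarity
conditions `s_ℓ + η_ℓ + μ d_ℓ = 0` and complementary slackness `η_ℓ = 0` when
`φ_ℓ ≠ 0` hold, then any two nonzero components force `s_{ℓ₁} d_{ℓ₂} = s_{ℓ₂} d_{ℓ₁}`;
hence for generic data the stationary point has at most one nonzero component. -/
theorem spml_unregularized_degenerate (N : ℕ) (hN : 1 ≤ N)
    (s d φ η : Fin N → ℝ) (hs : ∀ k, 0 ≤ s k) (hd : ∀ k, 0 ≤ d k) (μ : ℝ)
    (hstat : ∀ ℓ, s ℓ + η ℓ + μ * d ℓ = 0)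
    (hcs : ∀ ℓ, φ ℓ ≠ 0 → η ℓ = 0) :
    (∀ ℓ₁ ℓ₂, ℓ₁ ≠ ℓ₂ → φ ℓ₁ ≠ 0 → φ ℓ₂ ≠ 0 →
      s ℓ₁ * d ℓ₂ = s ℓ₂ * d ℓ₁) ∧
    ((∀ ℓ₁ ℓ₂, ℓ₁ ≠ ℓ₂ → s ℓ₁ * d ℓ₂ ≠ s ℓ₂ * d ℓ₁) →
      ∀ ℓ₁ ℓ₂, φ ℓ₁ ≠ 0 → φ ℓ₂ ≠ 0 → ℓ₁ = ℓ₂) := by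
  have key : ∀ ℓ₁ ℓ₂, ℓ₁ ≠ ℓ₂ → φ ℓ₁ ≠ 0 → φ ℓ₂ ≠ 0 →
      s ℓ₁ * d ℓ₂ = s ℓ₂ * d ℓ₁ := by
    intro ℓ₁ ℓ₂ _ h1 h2
    have e1 := hstat ℓ₁
    have e2 := hstat ℓ₂
    rw [hcs ℓ₁ h1] at e1
    rw [hcs ℓ₂ h2] at e2
    have a : s ℓ₁ = -μ * d ℓ₁ := by linarith
    have b : s ℓ₂ = -μ * d ℓ₂ := by linarith
    rw [a, b]; ring
  refine ⟨key, fun hgen ℓ₁ ℓ₂ h1 h2 => ?_⟩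
  by_contra hne
  exact hgen ℓ₁ ℓ₂ hne (key ℓ₁ ℓ₂ hne h1 h2)
end

section
/- Let s, d ∈ ℝ^N with s_ℓ ≠ 0 for every ℓ, and suppose φ, η, ξ ∈ ℝ^N and μ, γ ∈ ℝ satisfy the full stationarity system of the augmented Lagrangian of the unregularized SPML problem: (i) s_ℓ + η_ℓ + μ d_ℓ = 0 for every ℓ; (ii) Σ_{k=1}^N d_k φ_k = 1 + γ²; (iii) μ γ = 0; (iv) φ_ℓ = ξ_ℓ² for every ℓ; (v) η_ℓ ξ_ℓ = 0 for every ℓ. Then γ = 0, and consequently the minimizer satisfies the active constraint Σ_{k=1}^N d_k φ_k = 1. -/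
/-- Appendix A, first intermediate claim in the proof of Theorem 1, item 4:
at any stationary point of the augmented Lagrangian of the unregularized SPML
problem, the slack variable `γ` vanishes, hence the constraint is active:
`Σ d_k φ_k = 1`. -/
theorem spml_stationary_gamma_zero (N : ℕ) (hN : 1 ≤ N)
    (s d φ η ξ : Fin N → ℝ) (hd : ∀ k, 0 ≤ d k)
    (hs : ∀ ℓ, s ℓ ≠ 0) (μ γ : ℝ)
    (h1 : ∀ ℓ, s ℓ + η ℓ + μ * d ℓ = 0)
    (h2 : ∑ k, d k * φ k = 1 + γ ^ 2)
    (h3 : μ * γ = 0)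
    (h4 : ∀ ℓ, φ ℓ = (ξ ℓ) ^ 2)
    (h5 : ∀ ℓ, η ℓ * ξ ℓ = 0) :
    γ = 0 ∧ ∑ k, d k * φ k = 1 := by
  have hg : γ = 0 := by
    by_contra hg
    have hmu : μ = 0 := by
      rcases mul_eq_zero.mp h3 with h | h
      · exact h
      · exact absurd h hg
    have hxi : ∀ ℓ, ξ ℓ = 0 := by
      intro ℓ
      have heta : η ℓ = - s ℓ := by have := h1 ℓ; rw [hmu] at this; linarith
      rcases mul_eq_zero.mp (h5 ℓ) with h | h
      · exact absurd (by rw [heta] at h; simpa using h) (hs ℓ)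
      · exact h
    have hsum : ∑ k, d k * φ k = 0 := by
      apply Finset.sum_eq_zero
      intro k _
      rw [h4 k, hxi k]
      ring
    rw [hsum] at h2
    nlinarith [sq_nonneg γ, sq_abs γ, pow_pos (abs_pos.mpr hg) 2]
  refine ⟨hg, ?_⟩
  rw [h2, hg]
  ring
end

section
/- Let P be a finite index set and for each p ∈ P let u^p ∈ ℝ^N have nonnegative entries. Let s, φ, η ∈ ℝ^N and μ ∈ ℝ be such that Σ_{k=1}^N u^p_k φ_k > 0 for every p ∈ P, η_ℓ = 0 whenever φ_ℓ ≠ 0, and the stationarity condition s_ℓ + η_ℓ + (μ/2) Σ_{p∈P} u^p_ℓ (Σ_{k=1}^N u^p_k φ_k)^{−1/2} = 0 holds for every ℓ ∈ {1,…,N}. If there exist distinct indices ℓ₁ ≠ ℓ₂ with φ_{ℓ₁} ≠ 0 and φ_{ℓ₂} ≠ 0, then s_{ℓ₁} · Σ_{p∈P} u^p_{ℓ₂} (Σ_k u^p_k φ_k)^{−1/2} = s_{ℓ₂} · Σ_{p∈P} u^p_{ℓ₁} (Σ_k u^p_k φ_k)^{−1/2}. -/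
/-- Appendix A claim (correcting Xing et al.): with the unsquared dissimilarity
constraint `D̂(φ) = Σ_p (Σ_k u^p_k φ_k)^{1/2} ≥ 1`, the stationarity conditions
still force an equality between two generically unequal expressions whenever a
stationary point has two nonzero components. -/
theorem spml_xing_constraint_still_degenerate (N : ℕ) (hN : 1 ≤ N)
    (P : Type*) [Fintype P] (u : P → Fin N → ℝ) (hu : ∀ p k, 0 ≤ u p k)
    (s φ η : Fin N → ℝ) (μ : ℝ)
    (hpos : ∀ p, 0 < ∑ k, u p k * φ k)
    (hcs : ∀ ℓ, φ ℓ ≠ 0 → η ℓ = 0)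
    (hstat : ∀ ℓ, s ℓ + η ℓ +
      (μ / 2) * ∑ p, u p ℓ * (Real.sqrt (∑ k, u p k * φ k))⁻¹ = 0)
    (ℓ₁ ℓ₂ : Fin N) (hne : ℓ₁ ≠ ℓ₂) (h1 : φ ℓ₁ ≠ 0) (h2 : φ ℓ₂ ≠ 0) :
    s ℓ₁ * ∑ p, u p ℓ₂ * (Real.sqrt (∑ k, u p k * φ k))⁻¹ =
      s ℓ₂ * ∑ p, u p ℓ₁ * (Real.sqrt (∑ k, u p k * φ k))⁻¹ := by
  have e1 := hstat ℓ₁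
  have e2 := hstat ℓ₂
  rw [hcs ℓ₁ h1] at e1
  rw [hcs ℓ₂ h2] at e2
  have hs1 : s ℓ₁ = -((μ / 2) * ∑ p, u p ℓ₁ * (Real.sqrt (∑ k, u p k * φ k))⁻¹) := by
    linarith
  have hs2 : s ℓ₂ = -((μ / 2) * ∑ p, u p ℓ₂ * (Real.sqrt (∑ k, u p k * φ k))⁻¹) := by
    linarith
  rw [hs1, hs2]; ring
end
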